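/- Oracle inequality for the ℓ_{1-2} regularization: Let b = A x̄ with x̄ supported on S, |S| = s, and suppose A satisfies the ℓ_{1-2}-REC(s,s), i.e. φ(s,s) > 0. If x* satisfies ‖Ax* − b‖_2^2/2 + λ(‖x*‖_1 − ‖x*‖_2) ≤ λ(‖x̄‖_1 − ‖x̄‖_2), then (1/2)‖Ax* − b‖_2^2 + λ(‖x*_{S^c}‖_1 − ‖x*_{S^c}‖_2) ≤ 2λ²(√s + 1)² / φ²(s,s). -/

import Mathlib

open Finset

noncomputable def l1 {k : ℕ} (x : Fin k → ℝ) : ℝ := ∑ i, |x i|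

noncomputable def l2 {k : ℕ} (x : Fin k → ℝ) : ℝ := Real.sqrt (∑ i, (x i)^2)

def restr {k : ℕ} (I : Finset (Fin k)) (x : Fin k → ℝ) : Fin k → ℝ :=
  fun i => if i ∈ I then x i else 0


def TLargest {k : ℕ} (x : Fin k → ℝ) (I : Finset (Fin k)) (t : ℕ) (T : Finset (Fin k)) : Prop :=
  T ⊆ Iᶜ ∧ T.card = min t Iᶜ.card ∧ ∀ i ∈ T, ∀ j ∈ Iᶜ \ T, |x j| ≤ |x i|

/-! Put `h = x* - x̄`. Since `x̄` vanishes off `S`, the triangle inequalities for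
`‖·‖₁` and `‖·‖₂` turn the hypothesis into the basic inequality
`‖Ah‖²/2 + λ‖x*_{Sᶜ}‖₁ ≤ λ(‖h_S‖₁ + ‖h‖₂)`, which contains the cone condition of the REC.
With `T` the `s` largest entries of `h` off `S`, the REC gives `φ‖h_{S∪T}‖₂ ≤ ‖Ah‖₂`, while
`‖h_S‖₁ ≤ √s‖h_S‖₂` and `‖h‖₂ ≤ ‖h_S‖₂ + ‖h_{Sᶜ}‖₂` bound the left side of the claim by
`λ(√s + 1)‖Ah‖₂/φ`. A quantity that dominates `z²/2` and is at most `Lz` is at most `2L²`. -/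

section Norms

variable {k : ℕ}

lemma l1_nonneg (x : Fin k → ℝ) : 0 ≤ l1 x :=
  Finset.sum_nonneg fun _ _ => abs_nonneg _

lemma l2_nonneg (x : Fin k → ℝ) : 0 ≤ l2 x := Real.sqrt_nonneg _

lemma l2_sq (x : Fin k → ℝ) : l2 x ^ 2 = ∑ i, x i ^ 2 :=
  Real.sq_sqrt (Finset.sum_nonneg fun _ _ => sq_nonneg _)

lemma l2_le_l1 (x : Fin k → ℝ) : l2 x ≤ l1 x := by
  rw [l2, Real.sqrt_le_left (l1_nonneg x), l1]
  simpa only [sq_abs] using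
    Finset.sum_sq_le_sq_sum_of_nonneg (s := univ) (f := fun i => |x i|) fun i _ => abs_nonneg _

lemma l1_sub_le (x y : Fin k → ℝ) : l1 (x - y) ≤ l1 x + l1 y := by
  rw [l1, l1, l1, ← Finset.sum_add_distrib]
  exact Finset.sum_le_sum fun i _ => abs_sub (x i) (y i)

lemma l2_eq_norm (x : Fin k → ℝ) : l2 x = ‖WithLp.toLp 2 x‖ := by
  simp [EuclideanSpace.norm_eq, l2, sq_abs]

lemma l2_add_le (x y : Fin k → ℝ) : l2 (x + y) ≤ l2 x + l2 y := by
  simpa only [l2_eq_norm, WithLp.toLp_add] using norm_add_le _ _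

end Norms

section Restriction

variable {k : ℕ}

lemma restr_sub (I : Finset (Fin k)) (x y : Fin k → ℝ) :
    restr I (x - y) = restr I x - restr I y := by
  funext i
  by_cases hi : i ∈ I <;> simp [restr, hi]

lemma restr_eq_self_of_vanish {I : Finset (Fin k)} {x : Fin k → ℝ} (hx : ∀ i ∉ I, x i = 0) :
    restr I x = x := by
  funext i
  by_cases hi : i ∈ I <;> simp [restr, hi, hx]

lemma restr_compl_sub_of_vanish {I : Finset (Fin k)} {y : Fin k → ℝ} (hy : ∀ i ∉ I, y i = 0)
    (x : Fin k → ℝ) : restr Iᶜ (x - y) = restr Iᶜ x := by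
  funext i
  by_cases hi : i ∈ I <;> simp [restr, hi, hy]

lemma sum_restr (I : Finset (Fin k)) (x : Fin k → ℝ) {f : ℝ → ℝ} (hf : f 0 = 0) :
    ∑ i, f (restr I x i) = ∑ i ∈ I, f (x i) := by
  rw [← Finset.sum_subset (Finset.subset_univ I) fun i _ hi => by simp [restr, hi, hf]]
  exact Finset.sum_congr rfl fun i hi => by simp [restr, hi]

lemma l1_restr (I : Finset (Fin k)) (x : Fin k → ℝ) : l1 (restr I x) = ∑ i ∈ I, |x i| :=
  sum_restr I x abs_zero

lemma l2_restr_sq (I : Finset (Fin k)) (x : Fin k → ℝ) :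
    l2 (restr I x) ^ 2 = ∑ i ∈ I, x i ^ 2 := by
  rw [l2_sq]
  exact sum_restr I x (f := fun t => t ^ 2) (zero_pow two_ne_zero)

lemma l1_restr_add_l1_restr_compl (I : Finset (Fin k)) (x : Fin k → ℝ) :
    l1 (restr I x) + l1 (restr Iᶜ x) = l1 x := by
  rw [l1_restr, l1_restr, Finset.sum_add_sum_compl, l1]

lemma l2_le_l2_restr_add_l2_restr_compl (I : Finset (Fin k)) (x : Fin k → ℝ) :
    l2 x ≤ l2 (restr I x) + l2 (restr Iᶜ x) := by
  have hsq : l2 x ^ 2 = l2 (restr I x) ^ 2 + l2 (restr Iᶜ x) ^ 2 := by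
    rw [l2_sq, l2_restr_sq, l2_restr_sq, Finset.sum_add_sum_compl]
  refine le_of_pow_le_pow_left₀ two_ne_zero (add_nonneg (l2_nonneg _) (l2_nonneg _)) ?_
  nlinarith [mul_nonneg (l2_nonneg (restr I x)) (l2_nonneg (restr Iᶜ x))]

lemma l2_restr_mono {I J : Finset (Fin k)} (hIJ : I ⊆ J) (x : Fin k → ℝ) :
    l2 (restr I x) ≤ l2 (restr J x) := by
  refine le_of_pow_le_pow_left₀ two_ne_zero (l2_nonneg _) ?_
  rw [l2_restr_sq, l2_restr_sq]
  exact Finset.sum_le_sum_of_subset_of_nonneg hIJ fun i _ _ => sq_nonneg _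

lemma l1_restr_le_sqrt_card_mul_l2_restr (I : Finset (Fin k)) (x : Fin k → ℝ) :
    l1 (restr I x) ≤ Real.sqrt I.card * l2 (restr I x) := by
  rw [l2, sum_restr I x (f := fun t => t ^ 2) (zero_pow two_ne_zero), ← Real.sqrt_mul
    (Nat.cast_nonneg _), Real.le_sqrt (l1_nonneg _) (by positivity), l1_restr]
  simpa only [sq_abs] using sq_sum_le_card_mul_sum_sq (s := I) (f := fun i => |x i|)

lemma l1_restr_add_l2_sub_l2_restr_compl_le (I : Finset (Fin k)) (x : Fin k → ℝ) :
    l1 (restr I x) + l2 x - l2 (restr Iᶜ x) ≤ (Real.sqrt I.card + 1) * l2 (restr I x) := by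
  linarith [l1_restr_le_sqrt_card_mul_l2_restr I x, l2_le_l2_restr_add_l2_restr_compl I x]

end Restriction

lemma exists_subset_card_eq_forall_le {α β : Type*} [DecidableEq α] [LinearOrder β]
    (f : α → β) (C : Finset α) :
    ∀ n ≤ C.card, ∃ T ⊆ C, T.card = n ∧ ∀ i ∈ T, ∀ j ∈ C \ T, f j ≤ f i := by
  intro n
  induction n with
  | zero => exact fun _ => ⟨∅, by simp⟩
  | succ n ih =>
    intro hn
    obtain ⟨T, hTC, hTcard, hTmax⟩ := ih (Nat.le_of_succ_le hn)
    have hne : (C \ T).Nonempty := by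
      rw [← Finset.card_pos, Finset.card_sdiff_of_subset hTC]
      omega
    obtain ⟨a, haCT, hamax⟩ := Finset.exists_max_image (C \ T) f hne
    obtain ⟨haC, haT⟩ := Finset.mem_sdiff.mp haCT
    refine ⟨insert a T, Finset.insert_subset haC hTC, by rw [card_insert_of_notMem haT, hTcard],
      fun i hi j hj => ?_⟩
    have hj' : j ∈ C \ T := Finset.sdiff_subset_sdiff le_rfl (Finset.subset_insert a T) hj
    rcases Finset.mem_insert.mp hi with rfl | hiT
    · exact hamax j hj'
    · exact hTmax i hiT j hj'

lemma exists_tLargest {k : ℕ} (x : Fin k → ℝ) (I : Finset (Fin k)) (t : ℕ) :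
    ∃ T, TLargest x I t T :=
  exists_subset_card_eq_forall_le (fun i => |x i|) Iᶜ (min t Iᶜ.card) (min_le_right _ _)

section OracleInequality

variable {k : ℕ} {S : Finset (Fin k)} {xbar x : Fin k → ℝ} {c lam : ℝ}

lemma add_mul_l1_restr_compl_le (hxbar : ∀ i ∉ S, xbar i = 0) (hlam : 0 ≤ lam)
    (hlev : c + lam * (l1 x - l2 x) ≤ lam * (l1 xbar - l2 xbar)) :
    c + lam * l1 (restr Sᶜ x) ≤ lam * (l1 (restr S (x - xbar)) + l2 (x - xbar)) := by
  have hl1 : l1 xbar ≤ l1 (restr S x) + l1 (restr S (x - xbar)) := by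
    have := l1_sub_le (restr S x) (restr S (x - xbar))
    rwa [← restr_sub, sub_sub_cancel, restr_eq_self_of_vanish hxbar] at this
  have hl2 : l2 x ≤ l2 xbar + l2 (x - xbar) := by
    simpa only [add_sub_cancel] using l2_add_le xbar (x - xbar)
  rw [← l1_restr_add_l1_restr_compl S x] at hlev
  nlinarith [mul_le_mul_of_nonneg_left hl1 hlam, mul_le_mul_of_nonneg_left hl2 hlam]

lemma l1_restr_compl_le_of_objective_le (hxbar : ∀ i ∉ S, xbar i = 0) (hlam : 0 < lam)
    (hc : 0 ≤ c) (hlev : c + lam * (l1 x - l2 x) ≤ lam * (l1 xbar - l2 xbar)) :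
    l1 (restr Sᶜ (x - xbar)) ≤ l1 (restr S (x - xbar)) + l2 (x - xbar) := by
  have := add_mul_l1_restr_compl_le hxbar hlam.le hlev
  rw [← restr_compl_sub_of_vanish hxbar] at this
  exact le_of_mul_le_mul_left (by linarith) hlam

lemma add_mul_l1_sub_l2_restr_compl_le (hxbar : ∀ i ∉ S, xbar i = 0) (hlam : 0 ≤ lam)
    (hlev : c + lam * (l1 x - l2 x) ≤ lam * (l1 xbar - l2 xbar)) :
    c + lam * (l1 (restr Sᶜ x) - l2 (restr Sᶜ x)) ≤
      lam * (Real.sqrt S.card + 1) * l2 (restr S (x - xbar)) := by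
  have hbasic := add_mul_l1_restr_compl_le hxbar hlam hlev
  have hsplit := l1_restr_add_l2_sub_l2_restr_compl_le S (x - xbar)
  rw [restr_compl_sub_of_vanish hxbar] at hsplit
  nlinarith [mul_le_mul_of_nonneg_left hsplit hlam]

end OracleInequality

lemma le_two_mul_sq_of_half_sq_le_of_le_mul {q z L : ℝ}
    (hzq : z ^ 2 / 2 ≤ q) (hqz : q ≤ L * z) : q ≤ 2 * L ^ 2 := by
  nlinarith [sq_nonneg (z - 2 * L)]

theorem stmt12 {m n : ℕ} (A : Matrix (Fin m) (Fin n) ℝ) (xbar xstar : Fin n → ℝ)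
    (b : Fin m → ℝ) (S : Finset (Fin n)) (s : ℕ) (lam φ : ℝ) (hlam : 0 < lam)
    (hb : b = A.mulVec xbar) (hsupp : ∀ i, xbar i ≠ 0 ↔ i ∈ S) (hcardS : S.card = s)
    (hφ : 0 < φ)
    (hREC : ∀ (x : Fin n → ℝ) (I T : Finset (Fin n)), I.card ≤ s →
      l1 (restr Iᶜ x) ≤ l1 (restr I x) + l2 x → TLargest x I s T →
      φ * l2 (restr (I ∪ T) x) ≤ l2 (A.mulVec x))
    (hlev : (l2 (A.mulVec xstar - b))^2 / 2 + lam * (l1 xstar - l2 xstar) ≤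
            lam * (l1 xbar - l2 xbar)) :
    (1/2) * (l2 (A.mulVec xstar - b))^2 +
      lam * (l1 (restr Sᶜ xstar) - l2 (restr Sᶜ xstar)) ≤
      2 * lam^2 * (Real.sqrt s + 1)^2 / φ^2 := by
  have hxbar : ∀ i ∉ S, xbar i = 0 := fun i hi => not_not.mp (mt (hsupp i).mp hi)
  set h := xstar - xbar
  have hu : l2 (A.mulVec xstar - b) = l2 (A.mulVec h) := by rw [hb, Matrix.mulVec_sub]
  set u := l2 (A.mulVec xstar - b)
  have hcone := l1_restr_compl_le_of_objective_le hxbar hlam (by positivity) hlev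
  obtain ⟨T, hT⟩ := exists_tLargest h S s
  have hrec : φ * l2 (restr (S ∪ T) h) ≤ u := hu ▸ hREC h S T hcardS.le hcone hT
  have hbound : u ^ 2 / 2 + lam * (l1 (restr Sᶜ xstar) - l2 (restr Sᶜ xstar)) ≤
      lam * (Real.sqrt s + 1) * l2 (restr (S ∪ T) h) :=
    hcardS ▸ (add_mul_l1_sub_l2_restr_compl_le hxbar hlam.le hlev).trans
      (mul_le_mul_of_nonneg_left (l2_restr_mono subset_union_left h) (by positivity))
  have hpen : 0 ≤ l1 (restr Sᶜ xstar) - l2 (restr Sᶜ xstar) := sub_nonneg.mpr (l2_le_l1 _)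
  have key : (u ^ 2 / 2 + lam * (l1 (restr Sᶜ xstar) - l2 (restr Sᶜ xstar))) * φ ^ 2 ≤
      2 * (lam * (Real.sqrt s + 1)) ^ 2 := by
    refine le_two_mul_sq_of_half_sq_le_of_le_mul (z := φ * u) ?_ ?_
    · nlinarith [mul_nonneg (sq_nonneg φ) (mul_nonneg hlam.le hpen)]
    · nlinarith [mul_le_mul_of_nonneg_left hrec (by positivity : 0 ≤ lam * (Real.sqrt s + 1) * φ)]
  rw [le_div_iff₀ (by positivity)]
  linear_combination key
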